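/- Let H be a separable infinite-dimensional Hilbert space, let π : B(H) → B(H)/K(H) be the quotient map onto the Calkin algebra (K(H) the compact operators), let ξ₀ be a state on the Calkin algebra and set ξ = ξ₀∘π, a non-normal state on B(H). Let Q ∈ B(H) be a non-zero finite-rank projection, define φ(X) = QXQ and ψ(X) = (1/2)QXQ + (1/2)ξ(X)Q for X ∈ B(H). Then φ and ψ are completely positive, φ(I) = ψ(I) = Q, φ(X) − ψ(X) ∈ N_ξ for every X ∈ B(H) (i.e. φ and ψ are equal almost everywhere with respect to ξ), yet φ(Q) ≠ ψ(Q), so φ ≠ ψ. In particular, the normality hypothesis on ξ cannot be dropped from the a.e.-equivalence rigidity theorem. -/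

import Mathlib

noncomputable section

open scoped ComplexOrder

/-- A linear map between star algebras is *completely positive* if, at every matrix
level `n`, it maps positive matrices (those of the form `Nᴴ * N`) to positive matrices. -/
def IsCPMap {A B : Type*} [Ring A] [StarRing A] [Module ℂ A]
    [Ring B] [StarRing B] [Module ℂ B] (φ : A →ₗ[ℂ] B) : Prop :=
  ∀ (n : ℕ) (M : Matrix (Fin n) (Fin n) A),
    (∃ N : Matrix (Fin n) (Fin n) A, M = N.conjTranspose * N) →
    ∃ P : Matrix (Fin n) (Fin n) B, M.map φ = P.conjTranspose * P

/-- The Loewner order relation on bounded operators on a Hilbert space: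
`opLE x y` iff `y - x` is a positive operator. -/
def opLE {E : Type} [NormedAddCommGroup E] [InnerProductSpace ℂ E] [CompleteSpace E]
    (x y : E →L[ℂ] E) : Prop :=
  (y - x).IsPositive

/-- A state (positive linear functional) on `B(H)` is *normal* if it carries least upper
bounds of increasingly directed families of operators (in the Loewner order) to least
upper bounds in `ℂ`. -/
def IsNormalState {H : Type}
    [NormedAddCommGroup H] [InnerProductSpace ℂ H] [CompleteSpace H]
    (ξ : (H →L[ℂ] H) →ₗ[ℂ] ℂ) : Prop :=
  ∀ (ι : Type) [Nonempty ι] (x : ι → H →L[ℂ] H),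
    (∀ i j : ι, ∃ l : ι, opLE (x i) (x l) ∧ opLE (x j) (x l)) →
    ∀ s : H →L[ℂ] H, (∀ i, opLE (x i) s) →
      (∀ t : H →L[ℂ] H, (∀ i, opLE (x i) t) → opLE s t) →
      IsLUB (Set.range fun i => ξ (x i)) (ξ s)

/-! ### Auxiliary material -/

set_option maxHeartbeats 1000000
set_option synthInstance.maxHeartbeats 400000
set_option linter.unusedSectionVars false

section Aux

open ContinuousLinearMap Matrix

variable {H : Type} [NormedAddCommGroup H] [InnerProductSpace ℂ H] [CompleteSpace H]
variable {n : ℕ}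

/-- A continuous linear map with finite dimensional range is a compact operator. -/
lemma aux_compact_of_finrank (T : H →L[ℂ] H) (h : FiniteDimensional ℂ (LinearMap.range (T : H →ₗ[ℂ] H))) :
    IsCompactOperator T := by
  have key : IsCompactOperator ((T : H →ₗ[ℂ] H) : H → H) := by
    rw [isCompactOperator_iff_image_closedBall_subset_compact (T : H →ₗ[ℂ] H) (zero_lt_one)]
    refine ⟨Subtype.val '' Metric.closedBall (0 : LinearMap.range (T : H →ₗ[ℂ] H)) ‖T‖,
      (isCompact_closedBall _ _).image continuous_subtype_val, ?_⟩
    rintro _ ⟨x, hx, rfl⟩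
    refine ⟨⟨T x, LinearMap.mem_range_self _ x⟩, ?_, rfl⟩
    simp only [Metric.mem_closedBall, dist_zero_right] at hx ⊢
    calc ‖(⟨T x, LinearMap.mem_range_self _ x⟩ : LinearMap.range (T : H →ₗ[ℂ] H))‖ = ‖T x‖ := rfl
      _ ≤ ‖T‖ * ‖x‖ := T.le_opNorm x
      _ ≤ ‖T‖ * 1 := by nlinarith [norm_nonneg T]
      _ = ‖T‖ := mul_one _
  exact key

instance (priority := 1100) : CompleteSpace (PiLp 2 (fun _ : Fin n => H)) :=
  inferInstance

/-- The block operator on `H ⊕₂ ⋯ ⊕₂ H` determined by a matrix of operators. -/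
def mToCLM (M : Matrix (Fin n) (Fin n) (H →L[ℂ] H)) :
    PiLp 2 (fun _ : Fin n => H) →L[ℂ] PiLp 2 (fun _ : Fin n => H) :=
  (PiLp.continuousLinearEquiv 2 ℂ (fun _ : Fin n => H)).symm.toContinuousLinearMap ∘L
    (ContinuousLinearMap.pi fun i => ∑ j, (M i j) ∘L ContinuousLinearMap.proj j) ∘L
    (PiLp.continuousLinearEquiv 2 ℂ (fun _ : Fin n => H)).toContinuousLinearMap

lemma mToCLM_apply (M : Matrix (Fin n) (Fin n) (H →L[ℂ] H)) (v : PiLp 2 (fun _ : Fin n => H))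
    (i : Fin n) : mToCLM M v i = ∑ j, M i j (v j) := by
  simp [mToCLM, ContinuousLinearMap.proj, ContinuousLinearMap.sum_apply]

lemma mToCLM_mul (A B : Matrix (Fin n) (Fin n) (H →L[ℂ] H)) :
    mToCLM (A * B) = mToCLM A ∘L mToCLM B := by
  ext v i
  show mToCLM (A * B) v i = mToCLM A (mToCLM B v) i
  rw [mToCLM_apply, mToCLM_apply]
  simp only [Matrix.mul_apply, ContinuousLinearMap.sum_apply, ContinuousLinearMap.mul_apply]
  rw [Finset.sum_comm]
  refine Finset.sum_congr rfl fun k _ => ?_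
  rw [mToCLM_apply, map_sum]

lemma mToCLM_add (A B : Matrix (Fin n) (Fin n) (H →L[ℂ] H)) :
    mToCLM (A + B) = mToCLM A + mToCLM B := by
  ext v i
  show mToCLM (A + B) v i = mToCLM A v i + mToCLM B v i
  rw [mToCLM_apply, mToCLM_apply, mToCLM_apply, ← Finset.sum_add_distrib]
  exact Finset.sum_congr rfl fun j _ => rfl

lemma mToCLM_star (M : Matrix (Fin n) (Fin n) (H →L[ℂ] H)) :
    mToCLM M.conjTranspose = star (mToCLM M) := by
  rw [ContinuousLinearMap.star_eq_adjoint, ContinuousLinearMap.eq_adjoint_iff]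
  intro x y
  rw [PiLp.inner_apply, PiLp.inner_apply]
  simp only [mToCLM_apply, Matrix.conjTranspose_apply, inner_sum, sum_inner,
    ContinuousLinearMap.star_eq_adjoint, ContinuousLinearMap.adjoint_inner_left]
  exact Finset.sum_comm

/-- inclusion of the `j`-th summand -/
def sgl (n : ℕ) (j : Fin n) : H →L[ℂ] PiLp 2 (fun _ : Fin n => H) :=
  (PiLp.continuousLinearEquiv 2 ℂ (fun _ : Fin n => H)).symm.toContinuousLinearMap ∘L
    (ContinuousLinearMap.pi fun i => if i = j then ContinuousLinearMap.id ℂ H else 0)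

lemma sgl_apply (j : Fin n) (x : H) (i : Fin n) :
    sgl n j x i = if i = j then x else 0 := by
  by_cases h : i = j <;> simp [sgl, ContinuousLinearMap.pi_apply, h]

lemma sum_sgl (v : PiLp 2 (fun _ : Fin n => H)) : ∑ j, sgl n j (v j) = v := by
  refine PiLp.ext fun i => ?_
  have : (∑ j, sgl n j (v j)) i = ∑ j, sgl n j (v j) i := by
    rw [WithLp.ofLp_sum, Finset.sum_apply]
  rw [this]
  simp [sgl_apply]

lemma mToCLM_inj {M : Matrix (Fin n) (Fin n) (H →L[ℂ] H)} (h : mToCLM M = 0) : M = 0 := by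
  ext i j x
  have := congrArg (fun T : PiLp 2 (fun _ : Fin n => H) →L[ℂ] PiLp 2 (fun _ : Fin n => H) =>
    T (sgl n j x) i) h
  simp only [mToCLM_apply, ContinuousLinearMap.zero_apply] at this
  simp only [sgl_apply, apply_ite, map_zero] at this
  rw [Finset.sum_ite_eq' Finset.univ j (fun j' => M i j' x)] at this
  simpa using this

/-- extraction of the matrix of a block operator -/
def mOfCLM (S : PiLp 2 (fun _ : Fin n => H) →L[ℂ] PiLp 2 (fun _ : Fin n => H)) :
    Matrix (Fin n) (Fin n) (H →L[ℂ] H) := fun i j =>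
  (ContinuousLinearMap.proj i : (∀ _ : Fin n, H) →L[ℂ] H) ∘L
    (PiLp.continuousLinearEquiv 2 ℂ (fun _ : Fin n => H)).toContinuousLinearMap ∘L S ∘L sgl n j

lemma mOfCLM_apply (S : PiLp 2 (fun _ : Fin n => H) →L[ℂ] PiLp 2 (fun _ : Fin n => H))
    (i j : Fin n) (x : H) : mOfCLM S i j x = S (sgl n j x) i := rfl

lemma mToCLM_mOfCLM (S : PiLp 2 (fun _ : Fin n => H) →L[ℂ] PiLp 2 (fun _ : Fin n => H)) :
    mToCLM (mOfCLM S) = S := by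
  ext v i
  show mToCLM (mOfCLM S) v i = S v i
  rw [mToCLM_apply]
  simp only [mOfCLM_apply]
  have h1 : ∑ j, S (sgl n j (v j)) i = (∑ j, S (sgl n j (v j))) i := by
    rw [WithLp.ofLp_sum, Finset.sum_apply]
  rw [h1, ← map_sum, sum_sgl]

lemma mToCLM_sub (A B : Matrix (Fin n) (Fin n) (H →L[ℂ] H)) :
    mToCLM (A - B) = mToCLM A - mToCLM B := by
  ext v i
  show mToCLM (A - B) v i = mToCLM A v i - mToCLM B v i
  rw [mToCLM_apply, mToCLM_apply, mToCLM_apply, ← Finset.sum_sub_distrib]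
  exact Finset.sum_congr rfl fun j _ => rfl

lemma mToCLM_injective (A B : Matrix (Fin n) (Fin n) (H →L[ℂ] H))
    (h : mToCLM A = mToCLM B) : A = B := by
  have := mToCLM_inj (M := A - B) (by rw [mToCLM_sub, h, sub_self])
  rwa [sub_eq_zero] at this

/-- A sum of two "squares" of operator matrices is a square. -/
lemma aux_exists_sq (A B : Matrix (Fin n) (Fin n) (H →L[ℂ] H)) :
    ∃ P, A.conjTranspose * A + B.conjTranspose * B = P.conjTranspose * P := by
  set T := mToCLM (A.conjTranspose * A + B.conjTranspose * B) with hTdef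
  have hT' : T = star (mToCLM A) * mToCLM A + star (mToCLM B) * mToCLM B := by
    rw [hTdef, mToCLM_add, mToCLM_mul, mToCLM_mul, mToCLM_star, mToCLM_star]; rfl
  have hpos : 0 ≤ T := hT' ▸ add_nonneg (star_mul_self_nonneg _) (star_mul_self_nonneg _)
  set S := CFC.sqrt T with hSdef
  have hS : star S * S = T := by
    rw [(IsSelfAdjoint.of_nonneg (CFC.sqrt_nonneg (a := T))).star_eq]
    exact CFC.sqrt_mul_sqrt_self T hpos
  refine ⟨mOfCLM S, mToCLM_injective _ _ ?_⟩
  rw [mToCLM_mul, mToCLM_star, mToCLM_mOfCLM, ← hTdef, ← hS]; rfl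

/-! #### positive functionals -/

lemma xi_im (ξ : (H →L[ℂ] H) →ₗ[ℂ] ℂ) (hξpos : ∀ X : H →L[ℂ] H, 0 ≤ ξ (star X * X))
    (x : H →L[ℂ] H) : (ξ (star x * x)).im = 0 := ((Complex.le_def.mp (hξpos x)).2).symm

lemma xi_herm (ξ : (H →L[ℂ] H) →ₗ[ℂ] ℂ) (hξpos : ∀ X : H →L[ℂ] H, 0 ≤ ξ (star X * X))
    (a b : H →L[ℂ] H) : ξ (star b * a) = starRingEnd ℂ (ξ (star a * b)) := by
  have key1 : (ξ (star a * b)).im + (ξ (star b * a)).im = 0 := by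
    have h := xi_im ξ hξpos (a + b)
    rw [star_add, add_mul, mul_add, mul_add, map_add, map_add, map_add] at h
    simpa [Complex.add_im, xi_im ξ hξpos a, xi_im ξ hξpos b] using h
  have key2 : (ξ (star a * b)).re - (ξ (star b * a)).re = 0 := by
    have h := xi_im ξ hξpos (a + Complex.I • b)
    rw [star_add, star_smul, add_mul, mul_add, mul_add, map_add, map_add, map_add] at h
    rw [smul_mul_assoc, mul_smul_comm, smul_mul_assoc, mul_smul_comm, smul_smul] at h
    rw [_root_.map_smul, _root_.map_smul, _root_.map_smul] at h
    simp only [RingHom.id_apply, smul_eq_mul, Complex.add_im, Complex.mul_im] at h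
    simp only [Complex.star_def, Complex.conj_I] at h
    have h1 := xi_im ξ hξpos a
    have h2 := xi_im ξ hξpos b
    simp only [Complex.neg_re, Complex.neg_im, Complex.I_re, Complex.I_im, Complex.mul_re,
      Complex.mul_im, h1, h2] at h
    ring_nf at h ⊢
    linarith
  apply Complex.ext
  · simpa [Complex.conj_re] using (by linarith [key2] : (ξ (star b * a)).re = (ξ (star a * b)).re)
  · simpa [Complex.conj_im] using (by linarith [key1] : (ξ (star b * a)).im = -(ξ (star a * b)).im)

/-- The Gram matrix of a positive functional is positive semidefinite. -/
lemma gram_psd (ξ : (H →L[ℂ] H) →ₗ[ℂ] ℂ) (hξpos : ∀ X : H →L[ℂ] H, 0 ≤ ξ (star X * X))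
    {n : ℕ} (N : Matrix (Fin n) (Fin n) (H →L[ℂ] H)) :
    ((N.conjTranspose * N).map ξ).PosSemidef := by
  refine Matrix.PosSemidef.of_dotProduct_mulVec_nonneg ?_ ?_
  · ext i j
    simp only [Matrix.conjTranspose_apply, Matrix.map_apply, Matrix.mul_apply, map_sum, star_sum]
    refine Finset.sum_congr rfl fun k _ => ?_
    rw [Complex.star_def, ← xi_herm ξ hξpos]
  · intro x
    have swap : ∀ f : Fin n → Fin n → Fin n → ℂ,
        ∑ i, ∑ j, ∑ k, f i j k = ∑ k, ∑ i, ∑ j, f i j k := fun f =>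
      calc ∑ i, ∑ j, ∑ k, f i j k = ∑ i, ∑ k, ∑ j, f i j k :=
            Finset.sum_congr rfl fun i _ => Finset.sum_comm
        _ = ∑ k, ∑ i, ∑ j, f i j k := Finset.sum_comm
    have lhs : dotProduct (star x) (((N.conjTranspose * N).map ξ) *ᵥ x)
        = ∑ i, ∑ j, ∑ k, (starRingEnd ℂ (x i) * x j) * ξ (star (N k i) * N k j) := by
      simp only [dotProduct, Matrix.mulVec, Matrix.map_apply, Matrix.mul_apply,
        Matrix.conjTranspose_apply, Pi.star_apply, map_sum, Complex.star_def,
        dotProduct]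
      refine Finset.sum_congr rfl fun i _ => ?_
      rw [Finset.mul_sum]
      refine Finset.sum_congr rfl fun j _ => ?_
      rw [Finset.sum_mul, Finset.mul_sum]
      exact Finset.sum_congr rfl fun k _ => by ring
    have rhs : ∀ k, ξ (star (∑ i, x i • N k i) * (∑ j, x j • N k j))
        = ∑ i, ∑ j, (starRingEnd ℂ (x i) * x j) * ξ (star (N k i) * N k j) := by
      intro k
      rw [star_sum]
      simp only [star_smul, Finset.sum_mul, Finset.mul_sum, smul_mul_assoc, mul_smul_comm,
        smul_smul, map_sum, _root_.map_smul, smul_eq_mul, Complex.star_def]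
      rw [Finset.sum_comm]
      exact Finset.sum_congr rfl fun i _ => Finset.sum_congr rfl fun j _ => by ring
    rw [lhs, swap]
    refine Finset.sum_nonneg fun k _ => ?_
    rw [← rhs k]
    exact hξpos _

/-! #### orthogonal projections -/

/-- orthogonal projection as an endomorphism of `H` -/
def PK (K : Submodule ℂ H) [CompleteSpace K] : H →L[ℂ] H :=
  K.subtypeL ∘L K.orthogonalProjectionOnto

lemma PK_mem (K : Submodule ℂ H) [CompleteSpace K] (v : H) : PK K v ∈ K :=
  (K.orthogonalProjectionOnto v).2

lemma PK_sa (K : Submodule ℂ H) [CompleteSpace K] : IsSelfAdjoint (PK K) :=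
  isSelfAdjoint_starProjection K

lemma PK_inner (K : Submodule ℂ H) [CompleteSpace K] (v : H) :
    (inner ℂ (PK K v) v : ℂ) = ((‖PK K v‖ ^ 2 : ℝ) : ℂ) := by
  have h0 : (inner ℂ (PK K v) (v - PK K v) : ℂ) = 0 := by
    rw [← inner_conj_symm]
    have h0' : (inner ℂ (v - PK K v) (PK K v) : ℂ) = 0 :=
      Submodule.starProjection_inner_eq_zero v (PK K v) (PK_mem K v)
    rw [h0', map_zero]
  have hv : PK K v + (v - PK K v) = v := by abel
  calc (inner ℂ (PK K v) v : ℂ) = inner ℂ (PK K v) (PK K v + (v - PK K v)) := by rw [hv]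
    _ = inner ℂ (PK K v) (PK K v) + inner ℂ (PK K v) (v - PK K v) := inner_add_right _ _ _
    _ = ((‖PK K v‖ ^ 2 : ℝ) : ℂ) := by
        rw [h0, add_zero, inner_self_eq_norm_sq_to_K]
        norm_num

lemma PK_norm_le (K : Submodule ℂ H) [CompleteSpace K] (v : H) : ‖PK K v‖ ≤ ‖v‖ := by
  have : ‖PK K v‖ = ‖K.orthogonalProjectionOnto v‖ := rfl
  rw [this]
  calc ‖K.orthogonalProjectionOnto v‖ ≤ ‖(K.orthogonalProjectionOnto : H →L[ℂ] K)‖ * ‖v‖ :=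
        (K.orthogonalProjectionOnto).le_opNorm v
    _ ≤ 1 * ‖v‖ := mul_le_mul_of_nonneg_right K.orthogonalProjectionOnto_norm_le (norm_nonneg v)
    _ = ‖v‖ := one_mul _

lemma PK_proj_of_le {K L : Submodule ℂ H} [CompleteSpace K] [CompleteSpace L] (h : K ≤ L)
    (v : H) : PK K (PK L v) = PK K v := by
  have := Submodule.orthogonalProjectionOnto_starProjection_of_le h v
  calc PK K (PK L v) = (K.orthogonalProjectionOnto (L.starProjection v) : H) := rfl
    _ = (K.orthogonalProjectionOnto v : H) := by rw [this]
    _ = PK K v := rfl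

lemma PK_le {K L : Submodule ℂ H} [CompleteSpace K] [CompleteSpace L] (h : K ≤ L) :
    opLE (PK K) (PK L) := by
  refine ⟨ContinuousLinearMap.isSelfAdjoint_iff_isSymmetric.mp ((PK_sa L).sub (PK_sa K)), fun v => ?_⟩
  rw [ContinuousLinearMap.reApplyInnerSelf_apply, ContinuousLinearMap.sub_apply,
    inner_sub_left, map_sub, PK_inner, PK_inner]
  have h1 : ‖PK K v‖ ≤ ‖PK L v‖ := by
    rw [← PK_proj_of_le h v]
    exact PK_norm_le K (PK L v)
  have h2 : (0:ℝ) ≤ ‖PK K v‖ := norm_nonneg _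
  simp only [RCLike.re_to_complex, Complex.ofReal_re]
  nlinarith

lemma PK_le_one (K : Submodule ℂ H) [CompleteSpace K] : opLE (PK K) 1 := by
  refine ⟨ContinuousLinearMap.isSelfAdjoint_iff_isSymmetric.mp ((IsSelfAdjoint.one _).sub (PK_sa K)), fun v => ?_⟩
  rw [ContinuousLinearMap.reApplyInnerSelf_apply, ContinuousLinearMap.sub_apply,
    inner_sub_left, map_sub, PK_inner]
  have h1 : ‖PK K v‖ ≤ ‖v‖ := PK_norm_le K v
  have h2 : (0:ℝ) ≤ ‖PK K v‖ := norm_nonneg _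
  simp only [ContinuousLinearMap.one_apply]
  rw [inner_self_eq_norm_sq, RCLike.re_to_complex, Complex.ofReal_re]
  nlinarith

lemma PK_dist_le (K : Submodule ℂ H) [CompleteSpace K] (v w : H) (hw : w ∈ K) :
    ‖v - PK K v‖ ≤ ‖v - w‖ := by
  have : ‖v - PK K v‖ = ⨅ x : K, ‖v - x‖ := Submodule.starProjection_minimal v
  rw [this]
  exact ciInf_le ⟨0, fun b hb => by obtain ⟨y, rfl⟩ := hb; exact norm_nonneg _⟩ (⟨w, hw⟩ : K)

lemma PK_compact (K : Submodule ℂ H) [CompleteSpace K] [FiniteDimensional ℂ K] :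
    IsCompactOperator (PK K) := by
  apply aux_compact_of_finrank
  have hle : LinearMap.range (PK K : H →ₗ[ℂ] H) ≤ K := by
    rintro x ⟨v, rfl⟩
    exact PK_mem K v
  exact Submodule.finiteDimensional_of_le hle

end Aux

/-- **Example (normality is needed).** Let `H` be a separable infinite-dimensional
Hilbert space and let `ξ` be a state on `B(H)` vanishing on compact operators (i.e. a
state lifted from the Calkin algebra through the quotient map); such a `ξ` is non-normal.
Let `Q` be a non-zero finite-rank projection and set `φ(X) = QXQ`,
`ψ(X) = ½ QXQ + ½ ξ(X) Q`. Then `φ`, `ψ` are completely positive, `φ(I) = ψ(I) = Q`,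
`φ(X) - ψ(X) ∈ N_ξ` for every `X`, yet `φ(Q) ≠ ψ(Q)`, so `φ ≠ ψ`. -/
theorem nonnormal_state_counterexample
    (H : Type) [NormedAddCommGroup H] [InnerProductSpace ℂ H] [CompleteSpace H]
    [TopologicalSpace.SeparableSpace H] (hinf : ¬ FiniteDimensional ℂ H)
    (ξ : (H →L[ℂ] H) →ₗ[ℂ] ℂ)
    (hξpos : ∀ X : H →L[ℂ] H, 0 ≤ ξ (star X * X)) (hξ1 : ξ 1 = 1)
    (hξcompact : ∀ X : H →L[ℂ] H, IsCompactOperator X → ξ X = 0)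
    (Q : H →L[ℂ] H) (hQ0 : Q ≠ 0) (hQsa : IsSelfAdjoint Q) (hQidem : Q * Q = Q)
    (hQfin : FiniteDimensional ℂ (LinearMap.range (Q : H →ₗ[ℂ] H)))
    (φ ψ : (H →L[ℂ] H) →ₗ[ℂ] (H →L[ℂ] H))
    (hφ : ∀ X, φ X = Q * X * Q)
    (hψ : ∀ X, ψ X = (1 / 2 : ℂ) • (Q * X * Q) + (ξ X / 2) • Q) :
    ¬ IsNormalState ξ ∧
    IsCPMap φ ∧ IsCPMap ψ ∧ φ 1 = Q ∧ ψ 1 = Q ∧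
    (∀ X, ξ (star (φ X - ψ X) * (φ X - ψ X)) = 0) ∧
    φ Q ≠ ψ Q ∧ φ ≠ ψ := by
  -- compactness of Q
  have hQcpt : IsCompactOperator Q := aux_compact_of_finrank Q hQfin
  have hξQ : ξ Q = 0 := hξcompact Q hQcpt
  -- `φ Q ≠ ψ Q`
  have hneq : φ Q ≠ ψ Q := by
    intro h
    rw [hφ, hψ, hξQ] at h
    rw [hQidem, hQidem] at h
    simp only [zero_div, zero_smul, add_zero] at h
    have h2' : Q - (1/2 : ℂ) • Q = 0 := sub_eq_zero_of_eq h
    have h2 : ((1:ℂ) - 1/2) • Q = 0 := by rw [sub_smul, one_smul]; exact h2'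
    rw [smul_eq_zero] at h2
    rcases h2 with h2 | h2
    · norm_num at h2
    · exact hQ0 h2
  refine ⟨?_, ?_, ?_, ?_, ?_, ?_, hneq, fun h => hneq (by rw [h])⟩
  · -- non-normality
    intro hnorm
    haveI : Nonempty H := ⟨0⟩
    set u : ℕ → H := TopologicalSpace.denseSeq H with hu
    have hdense : DenseRange u := TopologicalSpace.denseRange_denseSeq H
    set V : ℕ → Submodule ℂ H := fun m => Submodule.span ℂ (u '' Set.Iio m) with hV
    haveI hVfd : ∀ m, FiniteDimensional ℂ (V m) := fun m =>
      FiniteDimensional.span_of_finite ℂ ((Set.finite_Iio m).image u)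
    have hVmono : ∀ {a b : ℕ}, a ≤ b → V a ≤ V b := fun {a b} hab =>
      Submodule.span_mono (Set.image_mono (fun x hx => lt_of_lt_of_le hx hab))
    set P : ℕ → (H →L[ℂ] H) := fun m => PK (V m) with hP
    have hdir : ∀ i j : ℕ, ∃ l : ℕ, opLE (P i) (P l) ∧ opLE (P j) (P l) := fun i j =>
      ⟨max i j, PK_le (hVmono (le_max_left i j)), PK_le (hVmono (le_max_right i j))⟩
    have hub : ∀ i : ℕ, opLE (P i) 1 := fun i => PK_le_one (V i)
    have hleast : ∀ t : H →L[ℂ] H, (∀ i, opLE (P i) t) → opLE (1 : H →L[ℂ] H) t := by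
      intro t ht
      have htsa : IsSelfAdjoint t := by
        have h0 := (ht 0).isSelfAdjoint
        have := h0.add (PK_sa (V 0))
        simpa [hP] using this
      refine ⟨ContinuousLinearMap.isSelfAdjoint_iff_isSymmetric.mp (htsa.sub (IsSelfAdjoint.one _)), fun v => ?_⟩
      rw [ContinuousLinearMap.reApplyInnerSelf_apply, ContinuousLinearMap.sub_apply,
        inner_sub_left, map_sub]
      simp only [ContinuousLinearMap.one_apply]
      rw [inner_self_eq_norm_sq]
      -- `P m v → v`
      have hconv : Filter.Tendsto (fun m => P m v) Filter.atTop (nhds v) := by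
        rw [Metric.tendsto_atTop]
        intro ε hε
        obtain ⟨k, hk⟩ := hdense.exists_dist_lt v hε
        refine ⟨k + 1, fun m hm => ?_⟩
        have hmem : u k ∈ V m :=
          Submodule.subset_span ⟨k, lt_of_lt_of_le (Nat.lt_succ_self k) hm, rfl⟩
        calc dist (P m v) v = ‖v - P m v‖ := by rw [dist_comm, dist_eq_norm]
          _ ≤ ‖v - u k‖ := PK_dist_le (V m) v (u k) hmem
          _ = dist v (u k) := (dist_eq_norm v (u k)).symm
          _ < ε := hk
      have hlim : Filter.Tendsto (fun m => ‖P m v‖ ^ 2) Filter.atTop (nhds (‖v‖ ^ 2)) :=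
        (hconv.norm).pow 2
      have hbd : ∀ m, ‖P m v‖ ^ 2 ≤ RCLike.re (inner ℂ (t v) v : ℂ) := by
        intro m
        have := (ht m).2 v
        rw [ContinuousLinearMap.reApplyInnerSelf_apply, ContinuousLinearMap.sub_apply,
          inner_sub_left, map_sub] at this
        have hPi : RCLike.re (inner ℂ (P m v) v : ℂ) = ‖P m v‖ ^ 2 := by
          rw [PK_inner, RCLike.re_to_complex, Complex.ofReal_re]
        linarith [this, hPi.symm.le]
      have := le_of_tendsto hlim (Filter.Eventually.of_forall hbd)
      linarith
    have hlub := hnorm ℕ (fun m => P m) hdir 1 hub hleast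
    have hz : (fun m => ξ (P m)) = fun _ => (0 : ℂ) := by
      funext m
      exact hξcompact (P m) (PK_compact (V m))
    rw [hz, hξ1, Set.range_const] at hlub
    have h10 : (1 : ℂ) ≤ 0 := hlub.2 (fun y hy => le_of_eq (by simpa using hy))
    rw [Complex.le_def] at h10
    norm_num at h10
  · -- φ is CP
    rintro n M ⟨N, rfl⟩
    refine ⟨N.map (fun X => X * Q), ?_⟩
    apply Matrix.ext
    intro i j
    simp only [Matrix.map_apply, Matrix.mul_apply, Matrix.conjTranspose_apply, hφ, map_sum]
    rw [Finset.mul_sum, Finset.sum_mul]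
    refine Finset.sum_congr rfl fun k _ => ?_
    rw [star_mul, hQsa.star_eq]
    noncomm_ring
  · -- ψ is CP
    rintro n M ⟨N, rfl⟩
    set c : ℂ := (((Real.sqrt 2)⁻¹ : ℝ) : ℂ) with hc
    have hr : ((Real.sqrt 2)⁻¹ : ℝ) * (Real.sqrt 2)⁻¹ = 1/2 := by
      rw [← mul_inv, Real.mul_self_sqrt (by norm_num : (0:ℝ) ≤ 2)]
      norm_num
    have hcc : starRingEnd ℂ c * c = 1 / 2 := by
      rw [hc, Complex.conj_ofReal, ← Complex.ofReal_mul, hr]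
      norm_num
    obtain ⟨C, hC⟩ : ∃ C : Matrix (Fin n) (Fin n) ℂ,
        (N.conjTranspose * N).map ξ = C.conjTranspose * C := by
      open scoped MatrixOrder Matrix.Norms.L2Operator in
      exact CStarAlgebra.nonneg_iff_eq_star_mul_self.mp (gram_psd ξ hξpos N).nonneg
    set A := N.map (fun X => c • (X * Q)) with hA
    set B := Matrix.of (fun k j : Fin n => (c * C k j) • Q) with hB
    have hAB : (N.conjTranspose * N).map ψ = A.conjTranspose * A + B.conjTranspose * B := by
      apply Matrix.ext
      intro i j
      have e1 : (A.conjTranspose * A) i j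
          = (1/2 : ℂ) • (Q * ((N.conjTranspose * N) i j) * Q) := by
        simp only [Matrix.mul_apply, Matrix.conjTranspose_apply, hA, Matrix.map_apply]
        rw [Finset.mul_sum, Finset.sum_mul, Finset.smul_sum]
        refine Finset.sum_congr rfl fun k _ => ?_
        rw [star_smul, star_mul, hQsa.star_eq, smul_mul_smul_comm, Complex.star_def, hcc]
        congr 1
      have e2 : (B.conjTranspose * B) i j
          = (ξ ((N.conjTranspose * N) i j) / 2) • Q := by
        simp only [Matrix.mul_apply, Matrix.conjTranspose_apply, hB, Matrix.of_apply]
        have hCij : ∑ k, starRingEnd ℂ (C k i) * C k j = ξ ((N.conjTranspose * N) i j) := by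
          have h' := congrArg (fun M : Matrix (Fin n) (Fin n) ℂ => M i j) hC
          simp only [Matrix.mul_apply, Matrix.conjTranspose_apply, Matrix.map_apply,
            Complex.star_def] at h'
          exact h'.symm
        calc ∑ k, star ((c * C k i) • Q) * ((c * C k j) • Q)
            = ∑ k, ((starRingEnd ℂ c * c) * (starRingEnd ℂ (C k i) * C k j)) • (Q * Q) := by
              refine Finset.sum_congr rfl fun k _ => ?_
              rw [star_smul, hQsa.star_eq, smul_mul_smul_comm, Complex.star_def, map_mul]
              congr 1
              ring
          _ = ((1/2 : ℂ) * ∑ k, starRingEnd ℂ (C k i) * C k j) • Q := by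
              simp only [hcc]
              rw [hQidem, ← Finset.sum_smul, ← Finset.mul_sum]
          _ = (ξ ((N.conjTranspose * N) i j) / 2) • Q := by
              rw [hCij]
              congr 1
              ring
      show ((N.conjTranspose * N).map ψ) i j = (A.conjTranspose * A + B.conjTranspose * B) i j
      rw [Matrix.map_apply, Matrix.add_apply, e1, e2, hψ]
    rw [hAB]
    exact aux_exists_sq A B
  · rw [hφ 1, mul_one, hQidem]
  · rw [hψ 1, mul_one, hQidem, hξ1]
    rw [← add_smul]
    norm_num
  · -- almost-everywhere equality
    intro X
    have hd : φ X - ψ X = Q * ((1/2 : ℂ) • (X * Q) - (ξ X / 2) • 1) := by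
      rw [hφ, hψ, mul_sub, mul_smul_comm, mul_smul_comm, mul_one, ← mul_assoc]
      module
    have hdcpt : IsCompactOperator (φ X - ψ X) := by
      rw [hd]
      exact hQcpt.comp_clm _
    have hcc2 : IsCompactOperator (⇑(star (φ X - ψ X)) ∘ ⇑(φ X - ψ X)) :=
      hdcpt.clm_comp (star (φ X - ψ X))
    exact hξcompact _ hcc2
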